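/- arXiv:1405.4755 — 8 statements merged into one kernel-verified Lean document; each statement's English description precedes it below -/
import Mathlib

section
/- For positive integers n and k with 2 ≤ k ≤ n/2, the binomial coefficient C(n,k) is not a prime power, i.e., there is no prime p and positive integer r with C(n,k) = p^r. -/
theorem choose_not_prime_pow (n k : ℕ) (hn : 0 < n) (hk : 0 < k)
    (h2 : 2 ≤ k) (hkn : k ≤ n / 2) :
    ¬ ∃ (p r : ℕ), p.Prime ∧ 0 < r ∧ n.choose k = p ^ r := by
  rintro ⟨p, r, hp, hr, hC⟩
  -- Any prime power dividing choose n k is at most n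
  have hfac : (n.choose k).factorization p = r := by
    rw [hC, hp.factorization_pow]; simp
  have h1 : p ^ r ≤ n := by
    have := Nat.pow_factorization_choose_le (p := p) (k := k) hn
    rwa [hfac] at this
  -- choose n 2 ≤ choose n k by monotonicity up to the middle
  have hmono : ∀ j, 2 ≤ j → j ≤ n / 2 → n.choose 2 ≤ n.choose j := by
    intro j hj2 hj
    induction j with
    | zero => omega
    | succ m ih =>
      rcases Nat.eq_or_lt_of_le hj2 with h | h
      · rw [← h]
      · have hm2 : 2 ≤ m := by omega
        have hm : m ≤ n / 2 := by omega
        exact le_trans (ih hm2 hm) (Nat.choose_le_succ_of_lt_half_left (by omega))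
  have h4 : 4 ≤ n := by omega
  have h2n : n < n.choose 2 := by
    obtain ⟨m, rfl⟩ : ∃ m, n = m + 4 := ⟨n - 4, by omega⟩
    rw [Nat.choose_two_right]
    have hs : m + 4 - 1 = m + 3 := by omega
    rw [hs]
    have heq : (m + 4) * (m + 3) = m * m + 7 * m + 12 := by ring
    omega
  have := hmono k h2 hkn
  omega
end

section
/- For positive integers n and k with 2 ≤ k ≤ n/2, the binomial coefficient C(n,k) has at least two distinct prime factors. -/
theorem choose_two_prime_factors (n k : ℕ) (hn : 0 < n) (hk : 0 < k)
    (h2 : 2 ≤ k) (hkn : k ≤ n / 2) :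
    2 ≤ (n.choose k).primeFactors.card := by
  have hn4 : 4 ≤ n := by omega
  have hkn' : k ≤ n := le_trans hkn (Nat.div_le_self n 2)
  have hpos : 0 < n.choose k := Nat.choose_pos hkn'
  -- C(n,2) ≤ C(n,k)
  have hmono : n.choose 2 ≤ n.choose k := by
    clear hpos hk
    induction k with
    | zero => omega
    | succ m ih =>
      rcases Nat.lt_or_ge m 2 with hm | hm
      · interval_cases m
        · omega
        · exact le_refl _
      · have hm2 : m ≤ n / 2 := by omega
        exact le_trans (ih hm hm2 (le_trans hm2 (Nat.div_le_self n 2)))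
          (Nat.choose_le_succ_of_lt_half_left (by omega))
  have h2c : n < n.choose k := by
    have : n < n.choose 2 := by
      rw [Nat.choose_two_right]
      have h1 : 2 * n + 2 ≤ n * (n - 1) := by nlinarith [Nat.sub_add_cancel (by omega : 1 ≤ n)]
      omega
    omega
  by_contra hcard
  push_neg at hcard
  interval_cases hc : (n.choose k).primeFactors.card
  · have : n.choose k = 1 := by
      have := Nat.primeFactors_eq_empty.mp (Finset.card_eq_zero.mp hc)
      omega
    omega
  · have hpp : IsPrimePow (n.choose k) :=
      isPrimePow_iff_card_primeFactors_eq_one.mpr hc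
    obtain ⟨p, a, hp, ha, hpa⟩ := hpp
    have hple : p ^ ((n.choose k).factorization p) ≤ n :=
      Nat.pow_factorization_choose_le hn
    have : (n.choose k).factorization p = a := by
      rw [← hpa, Nat.Prime.factorization_pow hp.nat_prime]
      simp
    rw [this, hpa] at hple
    omega
end

section
/- Fine's formula: for positive integers n and k, the sum of the multinomial coefficients C(k; k_1,...,k_n) = k!/(k_1!···k_n!) over all tuples (k_1,...,k_n) of nonnegative integers satisfying k_1 + k_2 + ··· + k_n = k and k_1 + 2k_2 + ··· + n·k_n = n equals the binomial coefficient C(n−1, k−1). -/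
/-!
The sum is the coefficient of `X ^ n` in `(X + X ^ 2 + ⋯ + X ^ n) ^ k`, by the multinomial theorem.
Below degree `n + 1` the polynomial `X + ⋯ + X ^ n` agrees with `X / (1 - X) = X * ∑ X ^ j`, so the
coefficient is also that of `X ^ n` in `X ^ k / (1 - X) ^ k`, namely `C(n - 1, k - 1)`.
-/

open PowerSeries Finset

section PowerSeries

variable {R : Type*} [CommSemiring R]

lemma coeff_pow_eq_of_trunc_eq {f g : R⟦X⟧} {n : ℕ} (h : trunc (n + 1) f = trunc (n + 1) g)
    (k : ℕ) : coeff n (f ^ k) = coeff n (g ^ k) := by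
  have := congrArg (fun p : Polynomial R => (trunc (n + 1) ((p : R⟦X⟧) ^ k)).coeff n) h
  simpa [coeff_trunc] using this

lemma coeff_sum_X_pow_pow {ι : Type*} [DecidableEq ι] (s : Finset ι) (w : ι → ℕ) (k n : ℕ) :
    coeff n ((∑ i ∈ s, (X : R⟦X⟧) ^ w i) ^ k)
      = ∑ g ∈ piAntidiag s k with ∑ i ∈ s, w i * g i = n, (Nat.multinomial s g : R) := by
  simp only [sum_pow_eq_sum_piAntidiag, map_sum, ← pow_mul, prod_pow_eq_pow_sum,
    ← map_natCast (C (R := R)), coeff_C_mul, coeff_X_pow, sum_filter, mul_ite, mul_one, mul_zero,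
    eq_comm (a := n)]

lemma trunc_sum_fin_X_pow_succ {m n : ℕ} (hnm : n ≤ m) :
    trunc (n + 1) (∑ i : Fin m, (X : R⟦X⟧) ^ (i.1 + 1)) = trunc (n + 1) (X * PowerSeries.mk 1) := by
  ext j : 1
  rw [coeff_trunc, coeff_trunc]
  split_ifs with hj
  · rcases j with _ | j
    · simp [coeff_X_pow]
    · simp [Fin.sum_univ_eq_sum_range (fun i => (X : R⟦X⟧) ^ (i + 1)), coeff_X_pow,
        show j < m by omega]
  · rfl

end PowerSeries

lemma coeff_X_mul_mk_one_pow {R : Type*} [CommRing R] {n k : ℕ} (hn : 0 < n) (hk : 0 < k) :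
    coeff n ((X * PowerSeries.mk 1 : R⟦X⟧) ^ k) = (n - 1).choose (k - 1) := by
  obtain ⟨d, rfl⟩ : ∃ d, k = d + 1 := ⟨k - 1, by omega⟩
  rw [mul_pow, mk_one_pow_eq_mk_choose_add, coeff_X_pow_mul', coeff_mk]
  split_ifs with h
  · congr 2
    omega
  · rw [Nat.choose_eq_zero_of_lt (by omega), Nat.cast_zero]

lemma filter_piAntidiag_weightedSum_eq (n k : ℕ) :
    {g ∈ piAntidiag (univ : Finset (Fin n)) k | ∑ i : Fin n, (i.1 + 1) * g i = n}
      = {f ∈ Fintype.piFinset fun _ : Fin n => range (n + 1) |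
          ∑ i, f i = k ∧ ∑ i : Fin n, (i.1 + 1) * f i = n} := by
  ext g
  simp only [mem_filter, mem_piAntidiag, Fintype.mem_piFinset, mem_range, mem_univ, implies_true,
    and_true]
  refine ⟨fun ⟨hk, hn⟩ => ⟨fun i => ?_, hk, hn⟩, fun ⟨_, hk, hn⟩ => ⟨hk, hn⟩⟩
  calc g i ≤ (i.1 + 1) * g i := Nat.le_mul_of_pos_left _ i.1.succ_pos
    _ ≤ ∑ j : Fin n, (j.1 + 1) * g j := single_le_sum (f := fun j : Fin n => (j.1 + 1) * g j)
        (fun _ _ => Nat.zero_le _) (mem_univ i)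
    _ < n + 1 := by omega

theorem fine_formula (n k : ℕ) (hn : 0 < n) (hk : 0 < k) :
    ∑ f ∈ (Fintype.piFinset fun _ : Fin n => Finset.range (n + 1)).filter
        (fun f => (∑ i, f i) = k ∧ (∑ i : Fin n, (i.1 + 1) * f i) = n),
      k.factorial / ∏ i, (f i).factorial
      = (n - 1).choose (k - 1) := by
  apply Nat.cast_injective (R := ℤ)
  rw [← filter_piAntidiag_weightedSum_eq, Nat.cast_sum]
  calc _ = ∑ g ∈ piAntidiag univ k with ∑ i : Fin n, (i.1 + 1) * g i = n,
          (Nat.multinomial univ g : ℤ) :=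
        sum_congr rfl fun g hg => by
          rw [Nat.multinomial, (mem_piAntidiag.1 (mem_filter.1 hg).1).1]
    _ = coeff n ((∑ i : Fin n, (X : ℤ⟦X⟧) ^ (i.1 + 1)) ^ k) := (coeff_sum_X_pow_pow ..).symm
    _ = coeff n ((X * PowerSeries.mk 1 : ℤ⟦X⟧) ^ k) :=
        coeff_pow_eq_of_trunc_eq (trunc_sum_fin_X_pow_succ le_rfl) k
    _ = (n - 1).choose (k - 1) := coeff_X_mul_mk_one_pow hn hk
end

section
/- Let p be a prime and r ≥ 1 with p^r > 2. If nonnegative integers k_1,...,k_n satisfy (k_1+···+k_n)!/(k_1!···k_n!) = p^r, then exactly two of the k_i are nonzero, one of them equals 1 and the other equals p^r − 1. -/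
/-!
Every binomial coefficient `(S choose k_j)` divides the multinomial coefficient, so it is a power
of `p`, and a power of `p` dividing `(S choose k)` is at most `S`. Since `(S choose k) > S`
whenever `2 ≤ k ≤ S - 2`, a part `k_j ≥ 2` forces the remaining parts to sum to at most `1`, and
the sum cannot be `0` because the multinomial coefficient is not `1`. Such a part exists, since
otherwise the multinomial coefficient is `S!`, which is not a prime power greater than `2`.
-/

open Finset

namespace Nat

theorem self_le_choose {n k : ℕ} (hk : 0 < k) (hkn : k < n) : n ≤ n.choose k := by
  induction n generalizing k with
  | zero => omega
  | succ m ih =>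
    obtain ⟨j, rfl⟩ := Nat.exists_eq_add_one_of_ne_zero hk.ne'
    rw [choose_succ_succ']
    rcases Nat.eq_zero_or_pos j with rfl | hj
    · simp [add_comm]
    · have := ih hj (by omega)
      have := choose_pos (show j + 1 ≤ m by omega)
      omega

theorem lt_choose {n k : ℕ} (hk : 2 ≤ k) (hkn : k + 2 ≤ n) : n < n.choose k := by
  obtain ⟨m, rfl⟩ := Nat.exists_eq_add_one_of_ne_zero (show n ≠ 0 by omega)
  obtain ⟨j, rfl⟩ := Nat.exists_eq_add_one_of_ne_zero (show k ≠ 0 by omega)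
  rw [choose_succ_succ']
  have := self_le_choose (show 0 < j by omega) (show j < m by omega)
  have := self_le_choose (show 0 < j + 1 by omega) (show j + 1 < m by omega)
  omega

theorem choose_le_of_dvd_prime_pow {p r n k : ℕ} (hp : p.Prime) (hn : 0 < n)
    (h : n.choose k ∣ p ^ r) : n.choose k ≤ n := by
  obtain ⟨t, -, ht⟩ := (dvd_prime_pow hp).mp h
  have := pow_factorization_choose_le (p := p) (k := k) hn
  rwa [ht, hp.factorization_pow, Finsupp.single_eq_same, ← ht] at this

theorem le_one_of_choose_add_dvd_prime_pow {p r a b : ℕ} (hp : p.Prime) (ha : 2 ≤ a)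
    (h : (a + b).choose a ∣ p ^ r) : b ≤ 1 := by
  by_contra! hb
  exact (lt_choose ha (by omega)).not_ge (choose_le_of_dvd_prime_pow hp (by omega) h)

theorem factorial_ne_prime_pow {p r : ℕ} (n : ℕ) (hp : p.Prime) (hpr : 2 < p ^ r) :
    n ! ≠ p ^ r := by
  intro h
  have hn : 3 ≤ n := by
    by_contra! hn
    interval_cases n <;> simp [factorial] at h <;> omega
  have prime_dvd (q : ℕ) (hq : q.Prime) (hqn : q ≤ n) : q = p :=
    (prime_dvd_prime_iff_eq hq hp).mp (hq.dvd_of_dvd_pow (h ▸ dvd_factorial hq.pos hqn))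
  have := prime_dvd 2 prime_two (by omega)
  have := prime_dvd 3 prime_three hn
  omega

variable {α : Type*} {s : Finset α} {f : α → ℕ}

theorem multinomial_eq_choose_mul_multinomial_erase [DecidableEq α] {a : α} (ha : a ∈ s) :
    multinomial s f = (∑ i ∈ s, f i).choose (f a) * multinomial (s.erase a) f := by
  rw [← insert_erase ha, multinomial_insert (notMem_erase a s), insert_erase ha,
    add_sum_erase s f ha]

theorem multinomial_eq_factorial_of_le_one (h : ∀ i ∈ s, f i ≤ 1) :
    multinomial s f = (∑ i ∈ s, f i)! := by
  have hprod : ∏ i ∈ s, (f i)! = 1 :=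
    prod_eq_one fun i hi => factorial_eq_one.mpr (h i hi)
  simpa [hprod] using multinomial_spec s f

theorem multinomial_eq_one_of_sum_le_one (h : ∑ i ∈ s, f i ≤ 1) : multinomial s f = 1 := by
  have := multinomial_spec s f
  rw [factorial_eq_one.mpr h] at this
  exact eq_one_of_mul_eq_one_left this

end Nat

theorem Finset.exists_eq_one_of_sum_eq_one {α : Type*} [DecidableEq α] {s : Finset α}
    {f : α → ℕ} (h : ∑ i ∈ s, f i = 1) :
    ∃ i ∈ s, f i = 1 ∧ ∀ j ∈ s, j ≠ i → f j = 0 := by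
  obtain ⟨i, hi, hfi⟩ := exists_ne_zero_of_sum_ne_zero (h ▸ one_ne_zero)
  have hsplit := add_sum_erase s f hi
  have hle : f i ≤ 1 := h ▸ single_le_sum (fun _ _ => Nat.zero_le _) hi
  refine ⟨i, hi, by omega, fun j hj hji => ?_⟩
  exact sum_eq_zero_iff.mp (by omega) j (mem_erase.mpr ⟨hji, hj⟩)

theorem multinomial_prime_pow_structure_general (p r n : ℕ) (hp : p.Prime)
    (hpr : 2 < p ^ r) (k : Fin n → ℕ)
    (h : (∑ i, k i).factorial / ∏ i, (k i).factorial = p ^ r) :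
    ∃ i j, i ≠ j ∧ k i = 1 ∧ k j = p ^ r - 1 ∧
      ∀ l, l ≠ i → l ≠ j → k l = 0 := by
  classical
  have hM : Nat.multinomial univ k = p ^ r := h
  obtain ⟨j, hj⟩ : ∃ j, 2 ≤ k j := by
    by_contra! hsmall
    exact Nat.factorial_ne_prime_pow _ hp hpr
      (hM ▸ (Nat.multinomial_eq_factorial_of_le_one fun i _ => by have := hsmall i; omega).symm)
  have hsplit := Nat.multinomial_eq_choose_mul_multinomial_erase (f := k) (mem_univ j)
  rw [← add_sum_erase univ k (mem_univ j), hM] at hsplit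
  have hrest_le : ∑ i ∈ univ.erase j, k i ≤ 1 :=
    Nat.le_one_of_choose_add_dvd_prime_pow hp hj (Dvd.intro _ hsplit.symm)
  rw [Nat.multinomial_eq_one_of_sum_le_one hrest_le, mul_one] at hsplit
  have hrest : ∑ i ∈ univ.erase j, k i = 1 := by
    by_contra hrest
    rw [show ∑ i ∈ univ.erase j, k i = 0 by omega, add_zero, Nat.choose_self] at hsplit
    omega
  rw [hrest, Nat.choose_succ_self_right] at hsplit
  obtain ⟨i, hi, hki, hzero⟩ := exists_eq_one_of_sum_eq_one hrest
  exact ⟨i, j, ne_of_mem_erase hi, hki, by omega,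
    fun l hli hlj => hzero l (mem_erase.mpr ⟨hlj, mem_univ l⟩) hli⟩

theorem multinomial_prime_pow_structure (p r n : ℕ) (hp : p.Prime) (hr : 1 ≤ r)
    (hpr : 2 < p ^ r) (k : Fin n → ℕ)
    (h : (∑ i, k i).factorial / ∏ i, (k i).factorial = p ^ r) :
    ∃ i j, i ≠ j ∧ k i = 1 ∧ k j = p ^ r - 1 ∧
      ∀ l, l ≠ i → l ≠ j → k l = 0 :=
  multinomial_prime_pow_structure_general p r n hp hpr k h
end

section
/- Let p be a prime and n, k, r positive integers with p^r > 2. The number M of tuples (k_1,...,k_n) of nonnegative integers with k_1+···+k_n = k, k_1+2k_2+···+n·k_n = n, and (k_1+···+k_n)!/(k_1!···k_n!) = p^r equals δ_{p^r,k}·(⌊(n−1)/(p^r−1)⌋ − δ_{0, n mod p^r}), where δ is the Kronecker delta. -/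
/-!
A multinomial coefficient `N! / ∏ kᵢ!` with `N = ∑ kᵢ` is divisible by each binomial coefficient
`C(N, kₐ)`. If it is a power of `p`, so is `C(N, kₐ)`; for `0 < kₐ < N` Kummer's bound on the
`p`-adic valuation of `C(N, kₐ)` together with `N ≤ C(N, kₐ)` forces `C(N, kₐ) = N`, so `N` is a
power of `p` and `kₐ ∈ {1, N - 1}`. With three or more nonzero parts, removing one part would make
both `N` and `N - 1` nontrivial powers of `p`. Hence the counted tuples have exactly two nonzero
entries, `k_a = 1` and `k_b = p^r - 1` with `a ≠ b`, `a + b (p^r - 1) = n` and `k = p^r`; they are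
indexed by the `b ≥ 1` with `b (p^r - 1) < n` and `b p^r ≠ n`.
-/

open Finset

namespace Nat

theorem self_le_choose_s11 {m j : ℕ} (hj : 0 < j) (hjm : j < m) : m ≤ m.choose j := by
  induction m generalizing j with
  | zero => omega
  | succ m ih =>
    obtain ⟨j, rfl⟩ := exists_add_one_eq.mpr hj
    rw [choose_succ_succ']
    rcases j.eq_zero_or_pos with rfl | hj
    · simp [add_comm]
    · have := ih hj (by omega)
      have := choose_pos (n := m) (k := j + 1) (by omega)
      omega

theorem self_lt_choose {m j : ℕ} (hj : 2 ≤ j) (hjm : j + 2 ≤ m) : m < m.choose j := by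
  obtain ⟨m, rfl⟩ : ∃ m', m = m' + 1 := ⟨m - 1, by omega⟩
  obtain ⟨j, rfl⟩ : ∃ j', j = j' + 1 := ⟨j - 1, by omega⟩
  rw [choose_succ_succ']
  have := self_le_choose_s11 (m := m) (j := j) (by omega) (by omega)
  have := self_le_choose_s11 (m := m) (j := j + 1) (by omega) (by omega)
  omega

theorem choose_eq_prime_pow {p m j u : ℕ} (hp : p.Prime) (hj : 0 < j) (hjm : j < m)
    (h : m.choose j = p ^ u) : m = p ^ u ∧ (j = 1 ∨ j = m - 1) := by
  have hle : m ≤ p ^ u := h ▸ self_le_choose_s11 hj hjm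
  have hge : p ^ u ≤ m := by
    simpa [h, hp.factorization_self] using
      pow_factorization_choose_le (p := p) (n := m) (k := j) (by omega)
  refine ⟨le_antisymm hle hge, ?_⟩
  by_contra! hne
  have := self_lt_choose (m := m) (j := j) (by omega) (by omega)
  omega

theorem pow_ne_pow_add_one {p u v : ℕ} (hp : 1 < p) (hv : v ≠ 0) : p ^ u ≠ p ^ v + 1 := by
  intro h
  rcases u.eq_zero_or_pos with rfl | hu
  · rw [pow_zero] at h
    have := pow_pos (zero_lt_of_lt hp) v
    omega
  · have : p ∣ 1 := (Nat.dvd_add_right (dvd_pow_self p hv)).mp (h ▸ dvd_pow_self p hu.ne')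
    exact hp.ne' (Nat.dvd_one.mp this)

section Multinomial

variable {α : Type*} {s : Finset α} {f : α → ℕ} {p t : ℕ}

theorem lt_sum_of_one_lt_card (hf : ∀ i ∈ s, f i ≠ 0) (hs : 1 < #s) {a : α} (ha : a ∈ s) :
    f a < ∑ i ∈ s, f i := by
  obtain ⟨b, hb, hba⟩ := exists_mem_ne hs a
  exact single_lt_sum hba ha hb (pos_of_ne_zero (hf b hb)) fun _ _ _ => zero_le _

variable [DecidableEq α]

theorem multinomial_eq_choose_mul_erase {a : α} (ha : a ∈ s) :
    multinomial s f = (∑ i ∈ s, f i).choose (f a) * multinomial (s.erase a) f := by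
  rw [← add_sum_erase s f ha, ← multinomial_insert (notMem_erase a s), insert_erase ha]

theorem sum_eq_prime_pow_of_multinomial_dvd (hp : p.Prime) (hf : ∀ i ∈ s, f i ≠ 0)
    (hs : 1 < #s) {a : α} (ha : a ∈ s) (h : multinomial s f ∣ p ^ t) :
    ∃ u, ∑ i ∈ s, f i = p ^ u ∧ (f a = 1 ∨ f a = ∑ i ∈ s, f i - 1) := by
  have hdvd : (∑ i ∈ s, f i).choose (f a) ∣ p ^ t :=
    (Dvd.intro _ (multinomial_eq_choose_mul_erase ha).symm).trans h
  obtain ⟨u, -, hu⟩ := (dvd_prime_pow hp).mp hdvd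
  exact ⟨u, choose_eq_prime_pow hp (pos_of_ne_zero (hf a ha)) (lt_sum_of_one_lt_card hf hs ha) hu⟩

theorem card_le_two_of_multinomial_dvd (hp : p.Prime) (hf : ∀ i ∈ s, f i ≠ 0)
    (h : multinomial s f ∣ p ^ t) : #s ≤ 2 := by
  by_contra! hs
  obtain ⟨a, ha⟩ := Finset.card_pos.mp (zero_lt_of_lt hs)
  have hf₀ : ∀ i ∈ s.erase a, f i ≠ 0 := fun i hi => hf i (mem_of_mem_erase hi)
  have hs₀ : 1 < #(s.erase a) := by
    rw [card_erase_of_mem ha]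
    omega
  obtain ⟨b, hb⟩ := Finset.card_pos.mp (zero_lt_of_lt hs₀)
  have h₀ : multinomial (s.erase a) f ∣ p ^ t :=
    (Dvd.intro_left _ (multinomial_eq_choose_mul_erase ha).symm).trans h
  obtain ⟨u, hu, hfa⟩ := sum_eq_prime_pow_of_multinomial_dvd hp hf (by omega) ha h
  obtain ⟨v, hv, -⟩ := sum_eq_prime_pow_of_multinomial_dvd hp hf₀ hs₀ hb h₀
  have hsplit := add_sum_erase s f ha
  have h₂ : 2 ≤ ∑ i ∈ s.erase a, f i := by
    have := lt_sum_of_one_lt_card hf₀ hs₀ hb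
    have := hf₀ b hb
    omega
  have hv₀ : v ≠ 0 := by
    rintro rfl
    rw [pow_zero] at hv
    omega
  exact pow_ne_pow_add_one hp.one_lt hv₀ (by omega : p ^ u = p ^ v + 1)

theorem exists_pair_of_multinomial_eq_prime_pow (hp : p.Prime) (ht : t ≠ 0)
    (hf : ∀ i ∈ s, f i ≠ 0) (h : multinomial s f = p ^ t) :
    ∃ a b, a ≠ b ∧ s = {a, b} ∧ f a = 1 ∧ f b = p ^ t - 1 := by
  have hs : 1 < #s := by
    by_contra! hs
    have : multinomial s f = 1 := by
      rcases le_one_iff_eq_zero_or_eq_one.mp hs with hs | hs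
      · simp [Finset.card_eq_zero.mp hs]
      · obtain ⟨x, rfl⟩ := Finset.card_eq_one.mp hs
        simp
    rw [this, eq_comm, Nat.pow_eq_one] at h
    exact h.elim hp.one_lt.ne' ht
  have hs₂ : #s = 2 := le_antisymm (card_le_two_of_multinomial_dvd hp hf h.dvd) hs
  obtain ⟨a, b, hab, rfl⟩ := card_eq_two.mp hs₂
  have ha := hf a (by simp)
  have hb := hf b (by simp)
  rw [binomial_eq_choose hab] at h
  obtain ⟨hsum, h₁ | h₁⟩ := choose_eq_prime_pow hp (pos_of_ne_zero ha) (by omega) h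
  · exact ⟨a, b, hab, rfl, h₁, by omega⟩
  · exact ⟨b, a, hab.symm, pair_comm a b, by omega, by omega⟩

end Multinomial

variable {ι : Type*} [Fintype ι] [DecidableEq ι]

theorem exists_eq_single_add_single_of_multinomial_eq_prime_pow {g : ι → ℕ} {p t : ℕ}
    (hp : p.Prime) (ht : t ≠ 0) (h : multinomial univ g = p ^ t) :
    ∃ a b, a ≠ b ∧ g = Pi.single a 1 + Pi.single b (p ^ t - 1) := by
  have hsupp : multinomial {i | g i ≠ 0} g = p ^ t := by
    rw [← h]
    exact multinomial_congr_of_sdiff (subset_univ _) (by simp) (fun _ _ => rfl)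
  obtain ⟨a, b, hab, hs, ha, hb⟩ :=
    exists_pair_of_multinomial_eq_prime_pow hp ht (fun i hi => (mem_filter.mp hi).2) hsupp
  refine ⟨a, b, hab, funext fun i => ?_⟩
  by_cases hia : i = a
  · simp [hia, hab, ha]
  by_cases hib : i = b
  · simp [hib, Ne.symm hab, hb]
  have hi : i ∉ ({i | g i ≠ 0} : Finset ι) := by simp [hs, hia, hib]
  simp only [mem_filter, mem_univ, true_and, not_not] at hi
  simp [hi, hia, hib]

theorem multinomial_single_add_single {a b : ι} (hab : a ≠ b) (m : ℕ) :
    multinomial univ (Pi.single a 1 + Pi.single b m) = m + 1 := by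
  rw [← multinomial_congr_of_sdiff (subset_univ {a, b}) (by simp_all) (fun _ _ => rfl),
    binomial_eq_choose hab]
  simp [hab, Ne.symm hab, add_comm]

end Nat

/-- Index `i : Fin n` stands for the part size `i + 1`: the pair `(a, b)` encodes the tuple with
`k_{a+1} = 1`, `k_{b+1} = q - 1` and all other entries `0`. -/
def solutionPairs (n q : ℕ) : Finset (Fin n × Fin n) :=
  univ.filter fun x => x.1 ≠ x.2 ∧ (x.1 + 1 : ℕ) + (x.2 + 1) * (q - 1) = n

def solutions (n q : ℕ) : Finset (Fin n → ℕ) :=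
  (solutionPairs n q).image fun x => Pi.single x.1 1 + Pi.single x.2 (q - 1)

theorem multinomial_eq_prime_pow_iff_mem_solutions {p n k r : ℕ} (hp : p.Prime) (hr : r ≠ 0)
    (f : Fin n → ℕ) :
    ((∑ i, f i) = k ∧ (∑ i : Fin n, (i.1 + 1) * f i) = n ∧ Nat.multinomial univ f = p ^ r) ↔
      k = p ^ r ∧ f ∈ solutions n (p ^ r) := by
  have hq := pow_pos hp.pos r
  have hsums (a b : Fin n) :
      ∑ i, (Pi.single a 1 + Pi.single b (p ^ r - 1) : Fin n → ℕ) i = p ^ r ∧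
      ∑ i : Fin n, (i.1 + 1) * (Pi.single a 1 + Pi.single b (p ^ r - 1) : Fin n → ℕ) i
        = (a + 1) + (b + 1) * (p ^ r - 1) := by
    simp only [Pi.add_apply, mul_add, sum_add_distrib, Pi.single_apply, mul_ite, mul_zero,
      sum_ite_eq', mem_univ, if_true, mul_one, and_true]
    omega
  constructor
  · rintro ⟨hk, hn, h⟩
    obtain ⟨a, b, hab, rfl⟩ :=
      Nat.exists_eq_single_add_single_of_multinomial_eq_prime_pow hp hr h
    rw [(hsums a b).1] at hk
    rw [(hsums a b).2] at hn
    exact ⟨hk.symm, mem_image.mpr ⟨(a, b), mem_filter.mpr ⟨mem_univ _, hab, hn⟩, rfl⟩⟩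
  · rintro ⟨rfl, hf⟩
    obtain ⟨⟨a, b⟩, hx, rfl⟩ := mem_image.mp hf
    obtain ⟨hab, hn⟩ := (mem_filter.mp hx).2
    exact ⟨(hsums a b).1, (hsums a b).2.trans hn,
      (Nat.multinomial_single_add_single hab _).trans (by omega)⟩

theorem card_solutions {n q : ℕ} (hq : 2 < q) : #(solutions n q) = #(solutionPairs n q) := by
  refine card_image_of_injOn fun x _ y _ hxy => ?_
  rcases (Pi.single_add_single_eq_single_add_single one_ne_zero (by omega : q - 1 ≠ 0)).mp hxy
    with ⟨h₁, h₂⟩ | ⟨h, -⟩ | ⟨h, -⟩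
  · exact Prod.ext h₁ h₂
  all_goals omega

theorem card_solutionPairs {n q : ℕ} (hq : 1 < q) :
    #(solutionPairs n q) = #{m ∈ range ((n - 1) / (q - 1)) | (m + 1) * q ≠ n} := by
  have hmem (m : ℕ) : m ∈ range ((n - 1) / (q - 1)) ↔ (m + 1) * (q - 1) < n := by
    have : 0 < (m + 1) * (q - 1) := Nat.mul_pos m.succ_pos (by omega)
    rw [mem_range, Nat.lt_iff_add_one_le, Nat.le_div_iff_mul_le (by omega)]
    omega
  have hsucc (m : ℕ) : (m + 1) * q = (m + 1) * (q - 1) + (m + 1) := by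
    rw [← Nat.mul_add_one, Nat.sub_add_cancel hq.le]
  refine card_bij (fun x _ => (x.2 : ℕ)) ?_ ?_ ?_
  · rintro ⟨a, b⟩ hx
    obtain ⟨hab, h⟩ := (mem_filter.mp hx).2
    dsimp only at hab h ⊢
    have := hsucc b
    refine mem_filter.mpr ⟨(hmem b).mpr (by omega), fun h' => hab (Fin.ext ?_)⟩
    omega
  · rintro ⟨a, b⟩ hx ⟨a', b'⟩ hx' hb
    have h := (mem_filter.mp hx).2.2
    have h' := (mem_filter.mp hx').2.2
    dsimp only at hb h h'
    rw [hb] at h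
    refine Prod.ext (Fin.ext ?_) (Fin.ext hb)
    dsimp only
    omega
  · intro m hm
    obtain ⟨hm, hmq⟩ := mem_filter.mp hm
    have hlt := (hmem m).mp hm
    have := hsucc m
    have : m + 1 ≤ (m + 1) * (q - 1) := Nat.le_mul_of_pos_right _ (by omega)
    refine ⟨(⟨n - (m + 1) * (q - 1) - 1, by omega⟩, ⟨m, by omega⟩),
      mem_filter.mpr ⟨mem_univ _, fun h => hmq ?_, ?_⟩, rfl⟩
    · have := Fin.val_eq_of_eq h
      dsimp only at this
      omega
    · dsimp only
      omega

theorem card_filter_succ_mul_ne {n q : ℕ} (hq : 1 < q) :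
    #{m ∈ range ((n - 1) / (q - 1)) | (m + 1) * q ≠ n} =
      (n - 1) / (q - 1) - if n % q = 0 then 1 else 0 := by
  rcases n.eq_zero_or_pos with rfl | hn
  · simp
  have hsplit : #{m ∈ range ((n - 1) / (q - 1)) | (m + 1) * q = n} +
      #{m ∈ range ((n - 1) / (q - 1)) | (m + 1) * q ≠ n} = (n - 1) / (q - 1) :=
    (card_filter_add_card_filter_not (fun m => (m + 1) * q = n)).trans (card_range _)
  suffices #{m ∈ range ((n - 1) / (q - 1)) | (m + 1) * q = n} = if n % q = 0 then 1 else 0 by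
    omega
  split_ifs with hqn
  · obtain ⟨c, rfl⟩ := Nat.dvd_of_mod_eq_zero hqn
    have hc : 0 < c := Nat.pos_of_mul_pos_left hn
    have hle : c * (q - 1) ≤ c * q - 1 := by
      obtain ⟨d, rfl⟩ : ∃ d, q = d + 1 := ⟨q - 1, by omega⟩
      rw [Nat.add_sub_cancel, mul_add_one]
      omega
    rw [card_eq_one]
    refine ⟨c - 1, ext fun m => ?_⟩
    rw [mem_filter, mem_range, mem_singleton, mul_comm q c, Nat.mul_left_inj (by omega),
      Nat.lt_iff_add_one_le, Nat.le_div_iff_mul_le (by omega)]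
    constructor
    · rintro ⟨-, rfl⟩
      rfl
    · rintro rfl
      exact ⟨by rwa [Nat.sub_add_cancel hc], by omega⟩
  · rw [card_eq_zero, filter_eq_empty_iff]
    rintro m - hm
    exact hqn (hm ▸ Nat.mul_mod_left _ _)

theorem merca_conjecture_general (p n k r : ℕ) (hp : p.Prime)
    (hpr : 2 < p ^ r) :
    Nat.card {f : Fin n → ℕ //
        (∑ i, f i) = k ∧ (∑ i : Fin n, (i.1 + 1) * f i) = n ∧
        (∑ i, f i).factorial / ∏ i, (f i).factorial = p ^ r}
      = (if k = p ^ r then 1 else 0) *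
        ((n - 1) / (p ^ r - 1) - if n % p ^ r = 0 then 1 else 0) := by
  have hr : r ≠ 0 := by
    rintro rfl
    simp at hpr
  refine (Nat.card_congr (Equiv.subtypeEquivRight fun f =>
    multinomial_eq_prime_pow_iff_mem_solutions hp hr f)).trans ?_
  by_cases hk : k = p ^ r
  · simp only [hk, true_and, if_true, one_mul]
    rw [Nat.card_eq_finsetCard, card_solutions hpr, card_solutionPairs (by omega),
      card_filter_succ_mul_ne (by omega)]
  · simp [hk]

theorem merca_conjecture (p n k r : ℕ) (hp : p.Prime)
    (hn : 0 < n) (hk : 0 < k) (hr : 0 < r) (hpr : 2 < p ^ r) :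
    Nat.card {f : Fin n → ℕ //
        (∑ i, f i) = k ∧ (∑ i : Fin n, (i.1 + 1) * f i) = n ∧
        (∑ i, f i).factorial / ∏ i, (f i).factorial = p ^ r}
      = (if k = p ^ r then 1 else 0) *
        ((n - 1) / (p ^ r - 1) - if n % p ^ r = 0 then 1 else 0) :=
  merca_conjecture_general p n k r hp hpr
end

section
/- For positive integers n and k, the number of tuples (k_1,...,k_n) of nonnegative integers with k_1+···+k_n = k, k_1+2k_2+···+n·k_n = n, and multinomial coefficient equal to 2 is δ_{2,k}·⌊(n−1)/2⌋. -/
lemma le_choose_of_mem : ∀ (k j : ℕ), 1 ≤ j → j < k → k ≤ k.choose j := by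
  intro k
  induction k with
  | zero => omega
  | succ k ih =>
    intro j h1 h2
    rcases Nat.eq_or_lt_of_le h1 with rfl | hj1
    · simp
    rcases Nat.eq_or_lt_of_le (Nat.lt_succ_iff.mp h2) with rfl | hjk
    · rw [Nat.choose_succ_self_right]
    · obtain ⟨m, rfl⟩ : ∃ m, j = m + 1 := ⟨j - 1, by omega⟩
      rw [Nat.choose_succ_succ']
      have h3 := ih (m+1) h1 hjk
      have h4 : 0 < k.choose m := Nat.choose_pos (by omega)
      omega

lemma sum_eq_two_of_multinomial_eq_two (n : ℕ) (f : Fin n → ℕ)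
    (h : (∑ i, f i).factorial / ∏ i, (f i).factorial = 2) : ∑ i, f i = 2 := by
  have hmul : Nat.multinomial Finset.univ f = 2 := h
  set k := ∑ i, f i with hk
  by_cases hz : ∀ i, f i = 0
  · rw [Nat.multinomial] at hmul
    simp [hz] at hmul
  push_neg at hz
  obtain ⟨i, hi⟩ := hz
  have hins := Nat.multinomial_insert (Finset.notMem_erase i Finset.univ) f
  rw [Finset.insert_erase (Finset.mem_univ i)] at hins
  have hsum : f i + ∑ j ∈ Finset.univ.erase i, f j = k := by
    rw [Finset.add_sum_erase _ f (Finset.mem_univ i)]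
  rw [hsum, hmul] at hins
  have hpos : 0 < Nat.multinomial (Finset.univ.erase i) f := Nat.multinomial_pos _ _
  by_cases hj : ∃ j, j ≠ i ∧ f j ≠ 0
  · obtain ⟨j, hji, hj0⟩ := hj
    have hle : f i + f j ≤ k := by
      rw [hk]
      calc f i + f j = ∑ l ∈ {i, j}, f l := by rw [Finset.sum_pair (Ne.symm hji)]
        _ ≤ ∑ l, f l := Finset.sum_le_sum_of_subset (Finset.subset_univ _)
    have h1 : k.choose (f i) ≤ 2 := Nat.le_of_dvd (by norm_num) ⟨_, hins⟩
    have h2 : k ≤ k.choose (f i) := le_choose_of_mem k (f i) (by omega) (by omega)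
    omega
  · push_neg at hj
    have hzero : ∀ l ∈ Finset.univ.erase i, f l = 0 := by
      intro l hl
      exact hj l (Finset.ne_of_mem_erase hl)
    have : Nat.multinomial (Finset.univ.erase i) f = 1 := by
      rw [Nat.multinomial, Finset.sum_eq_zero hzero, Finset.prod_congr rfl
        (fun l hl => by rw [hzero l hl])]
      simp
    have hki : f i = k := by
      rw [hk, ← Finset.add_sum_erase _ f (Finset.mem_univ i), Finset.sum_eq_zero hzero, add_zero]
    rw [this, mul_one, hki, Nat.choose_self] at hins
    omega

theorem count_multinomial_two (n k : ℕ) (hn : 0 < n) (hk : 0 < k) :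
    Nat.card {f : Fin n → ℕ //
        (∑ i, f i) = k ∧ (∑ i : Fin n, (i.1 + 1) * f i) = n ∧
        (∑ i, f i).factorial / ∏ i, (f i).factorial = 2}
      = (if k = 2 then 1 else 0) * ((n - 1) / 2) := by
  by_cases hk2 : k = 2
  · subst hk2
    rw [if_pos rfl, one_mul]
    -- the bijection from Fin ((n-1)/2)
    have hAB : ∀ a : ℕ, a < (n-1)/2 → a < n ∧ n - 2 - a < n ∧ a < n - 2 - a := by
      intro a ha; omega
    set g : Fin ((n-1)/2) → (Fin n → ℕ) :=
      fun a i => if i.1 = a.1 ∨ i.1 = n - 2 - a.1 then 1 else 0 with hg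
    have hfilter : ∀ a : Fin ((n-1)/2),
        Finset.univ.filter (fun i : Fin n => i.1 = a.1 ∨ i.1 = n - 2 - a.1)
          = {⟨a.1, (hAB a.1 a.2).1⟩, ⟨n - 2 - a.1, (hAB a.1 a.2).2.1⟩} := by
      intro a
      ext l
      simp [Fin.ext_iff]
    have hne : ∀ a : Fin ((n-1)/2),
        (⟨a.1, (hAB a.1 a.2).1⟩ : Fin n) ≠ ⟨n - 2 - a.1, (hAB a.1 a.2).2.1⟩ := by
      intro a
      simp only [ne_eq, Fin.ext_iff]
      have := (hAB a.1 a.2).2.2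
      omega
    have hsum : ∀ a : Fin ((n-1)/2), ∑ i, g a i = 2 := by
      intro a
      rw [hg]
      simp only
      rw [← Finset.sum_filter, hfilter a, Finset.sum_pair (hne a)]
    have hwsum : ∀ a : Fin ((n-1)/2), ∑ i : Fin n, (i.1 + 1) * g a i = n := by
      intro a
      rw [hg]
      simp only [mul_ite, mul_one, mul_zero]
      rw [← Finset.sum_filter, hfilter a, Finset.sum_pair (hne a)]
      show (a.1 + 1) + ((n - 2 - a.1) + 1) = n
      have := a.2
      omega
    have hprod : ∀ a : Fin ((n-1)/2), ∏ i, (g a i).factorial = 1 := by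
      intro a
      apply Finset.prod_eq_one
      intro i _
      show (if i.1 = a.1 ∨ i.1 = n - 2 - a.1 then 1 else 0).factorial = 1
      split <;> simp
    set G : Fin ((n-1)/2) → {f : Fin n → ℕ //
        (∑ i, f i) = 2 ∧ (∑ i : Fin n, (i.1 + 1) * f i) = n ∧
        (∑ i, f i).factorial / ∏ i, (f i).factorial = 2} :=
      fun a => ⟨g a, hsum a, hwsum a, by rw [hsum a, hprod a]; rfl⟩ with hG
    have hbij : Function.Bijective G := by
      constructor
      · intro a b hab
        have h1 : g a = g b := congrArg Subtype.val hab
        have h2 := congrFun h1 ⟨a.1, (hAB a.1 a.2).1⟩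
        rw [hg] at h2
        simp only [true_or, if_pos, if_true, eq_comm] at h2
        have h3 : (a.1 = b.1 ∨ a.1 = n - 2 - b.1) := by
          by_contra hc
          rw [if_neg hc] at h2
          simp at h2
        have ha := a.2
        have hb := b.2
        apply Fin.ext
        omega
      · rintro ⟨f, h1, h2, h3⟩
        -- all entries ≤ 1
        rw [h1] at h3
        have hprodpos : 0 < ∏ i, (f i).factorial :=
          Finset.prod_pos (fun i _ => Nat.factorial_pos _)
        have hprod1 : ∏ i, (f i).factorial = 1 := by
          by_contra hc
          have h5 : 1 < ∏ i, (f i).factorial := by omega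
          have h6 := Nat.div_lt_self (Nat.factorial_pos 2) h5
          have h7 : Nat.factorial 2 = 2 := rfl
          omega
        have hle1 : ∀ i, f i ≤ 1 := by
          intro i
          have hdvd : (f i).factorial ∣ ∏ j, (f j).factorial :=
            Finset.dvd_prod_of_mem _ (Finset.mem_univ i)
          rw [hprod1] at hdvd
          have := Nat.eq_one_of_dvd_one hdvd
          rcases Nat.lt_or_ge (f i) 2 with h | h
          · omega
          · exfalso
            have h4 : 2 ≤ (f i).factorial := by
              calc 2 = (2:ℕ).factorial := rfl
                _ ≤ (f i).factorial := Nat.factorial_le h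
            omega
        -- exactly two ones
        have hcard : (Finset.univ.filter (fun i : Fin n => f i = 1)).card = 2 := by
          have : ∑ i, f i = ∑ i : Fin n, (if f i = 1 then 1 else 0) := by
            apply Finset.sum_congr rfl
            intro i _
            have := hle1 i
            split <;> omega
          rw [this, ← Finset.sum_filter, Finset.sum_const, smul_eq_mul, mul_one] at h1
          exact h1
        obtain ⟨i, j, hij, hset⟩ := Finset.card_eq_two.mp hcard
        -- wlog i.1 < j.1
        obtain ⟨i, j, hij, hset⟩ : ∃ i j : Fin n, i.1 < j.1 ∧
            Finset.univ.filter (fun i : Fin n => f i = 1) = {i, j} := by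
          rcases Nat.lt_or_ge i.1 j.1 with h | h
          · exact ⟨i, j, h, hset⟩
          · refine ⟨j, i, ?_, by rw [hset, Finset.pair_comm]⟩
            have : i.1 ≠ j.1 := fun hc => hij (Fin.ext hc)
            omega
        have hfi : f i = 1 := by
          have : i ∈ Finset.univ.filter (fun i : Fin n => f i = 1) := by
            rw [hset]; simp
          simpa using this
        have hfj : f j = 1 := by
          have : j ∈ Finset.univ.filter (fun i : Fin n => f i = 1) := by
            rw [hset]; simp
          simpa using this
        have hother : ∀ l : Fin n, l ≠ i → l ≠ j → f l = 0 := by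
          intro l hli hlj
          have : l ∉ Finset.univ.filter (fun i : Fin n => f i = 1) := by
            rw [hset]; simp [hli, hlj]
          simp only [Finset.mem_filter, Finset.mem_univ, true_and] at this
          have := hle1 l
          omega
        -- weighted sum gives i.1 + j.1 = n - 2
        have hw : (i.1 + 1) + (j.1 + 1) = n := by
          have : ∑ l : Fin n, (l.1 + 1) * f l
              = ∑ l : Fin n, (if f l = 1 then l.1 + 1 else 0) := by
            apply Finset.sum_congr rfl
            intro l _
            have := hle1 l
            rcases Nat.le_one_iff_eq_zero_or_eq_one.mp this with h | h <;> simp [h]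
          rw [this, ← Finset.sum_filter, hset,
            Finset.sum_pair (fun hc => by exact absurd (congrArg Fin.val hc) (by omega))] at h2
          exact h2
        have hilt : i.1 < (n-1)/2 := by omega
        refine ⟨⟨i.1, hilt⟩, ?_⟩
        rw [hG]
        apply Subtype.ext
        simp only
        funext l
        rw [hg]
        simp only
        have hj1 : j.1 = n - 2 - i.1 := by omega
        by_cases hl : l.1 = i.1 ∨ l.1 = n - 2 - i.1
        · rw [if_pos hl]
          rcases hl with hl | hl
          · rw [show l = i from Fin.ext hl, hfi]
          · rw [show l = j from Fin.ext (by omega), hfj]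
        · rw [if_neg hl]
          push_neg at hl
          refine (hother l (fun hc => hl.1 (congrArg Fin.val hc))
            (fun hc => hl.2 (by rw [congrArg Fin.val hc]; omega))).symm
    rw [← Nat.card_eq_of_bijective G hbij, Nat.card_eq_fintype_card, Fintype.card_fin]
  · rw [if_neg hk2, zero_mul]
    have : IsEmpty {f : Fin n → ℕ //
        (∑ i, f i) = k ∧ (∑ i : Fin n, (i.1 + 1) * f i) = n ∧
        (∑ i, f i).factorial / ∏ i, (f i).factorial = 2} := by
      constructor
      rintro ⟨f, h1, _, h3⟩
      exact hk2 (h1 ▸ sum_eq_two_of_multinomial_eq_two n f h3)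
    exact Nat.card_of_isEmpty
end

section
/- For positive integers n and k with 2 ≤ k ≤ n/2, gcd(C(n,k), n) > 1. -/
theorem gcd_choose_self_gt_one (n k : ℕ) (hn : 0 < n) (hk : 0 < k)
    (h2 : 2 ≤ k) (hkn : k ≤ n / 2) : 1 < Nat.gcd (n.choose k) n := by
  by_contra h
  push_neg at h
  have hg : Nat.gcd (n.choose k) n = 1 := by
    have := Nat.gcd_pos_of_pos_right (n.choose k) hn
    omega
  have hcop : Nat.Coprime n (n.choose k) := (Nat.coprime_comm.mp hg)
  obtain ⟨n', rfl⟩ : ∃ n', n = n' + 1 := ⟨n - 1, by omega⟩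
  obtain ⟨k', rfl⟩ : ∃ k', k = k' + 1 := ⟨k - 1, by omega⟩
  have key := Nat.add_one_mul_choose_eq n' k'
  have hdvd : (n' + 1) ∣ (n' + 1).choose (k' + 1) * (k' + 1) := ⟨n'.choose k', by
    rw [← key]⟩
  have : (n' + 1) ∣ (k' + 1) := hcop.dvd_of_dvd_mul_left hdvd
  have hlt : k' + 1 < n' + 1 := by
    have := Nat.div_lt_self (by omega : 0 < n' + 1) one_lt_two
    omega
  exact absurd (Nat.le_of_dvd (by omega) this) (by omega)
end

section
/- If n and k are positive integers with 2 ≤ k ≤ n/2 and gcd(C(n,k), n−1) > 1, then C(n,k) has at least two distinct prime factors. -/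
/-!
From `k * C(n, k) = n * C(n - 1, k - 1)`, if `C(n, k)` were coprime to `n` then `n ∣ k`, which is
impossible for `0 < k < n`; so `C(n, k)` shares a prime `q` with `n`. It also shares a prime `p`
with `n - 1`, and `p ≠ q` because `n` and `n - 1` are coprime.
-/

namespace Nat

theorem self_dvd_mul_choose {n k : ℕ} (hk : 0 < k) (hkn : k ≤ n) : n ∣ k * n.choose k := by
  obtain ⟨m, rfl⟩ : ∃ m, n = m + 1 := exists_eq_add_one.mpr (hk.trans_le hkn)
  obtain ⟨j, rfl⟩ : ∃ j, k = j + 1 := exists_eq_add_one.mpr hk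
  exact ⟨m.choose j, by rw [mul_comm, ← add_one_mul_choose_eq]⟩

theorem not_coprime_choose {n k : ℕ} (hk : 0 < k) (hkn : k < n) : ¬ n.Coprime (n.choose k) :=
  fun hcop => hkn.not_ge <| le_of_dvd hk <|
    hcop.dvd_of_dvd_mul_right (self_dvd_mul_choose hk hkn.le)

theorem two_le_card_primeFactors {m p q : ℕ} (hm : m ≠ 0) (hp : p.Prime) (hq : q.Prime)
    (hpq : p ≠ q) (hpm : p ∣ m) (hqm : q ∣ m) : 2 ≤ m.primeFactors.card :=
  Finset.one_lt_card.mpr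
    ⟨p, mem_primeFactors.mpr ⟨hp, hpm, hm⟩, q, mem_primeFactors.mpr ⟨hq, hqm, hm⟩, hpq⟩

end Nat

theorem gcd_pred_two_prime_factors_general (n k : ℕ) (hk : 0 < k)
    (hkn : k ≤ n / 2) (hgcd : 1 < Nat.gcd (n.choose k) (n - 1)) :
    2 ≤ (n.choose k).primeFactors.card := by
  have hk_lt : k < n := by omega
  obtain ⟨p, hp, hpC, hpn⟩ := Nat.Prime.not_coprime_iff_dvd.mp hgcd.ne'
  obtain ⟨q, hq, hqn, hqC⟩ := Nat.Prime.not_coprime_iff_dvd.mp (Nat.not_coprime_choose hk hk_lt)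
  have hpq : p ≠ q := by
    rintro rfl
    have hcop : n.Coprime (n - 1) :=
      (Nat.coprime_self_sub_right (by omega)).mpr (Nat.coprime_one_right n)
    exact hp.one_lt.ne' (Nat.eq_one_of_dvd_coprimes hcop hqn hpn)
  exact Nat.two_le_card_primeFactors (Nat.choose_pos hk_lt.le).ne' hp hq hpq hpC hqC

theorem gcd_pred_two_prime_factors (n k : ℕ) (hn : 0 < n) (hk : 0 < k)
    (h2 : 2 ≤ k) (hkn : k ≤ n / 2) (hgcd : 1 < Nat.gcd (n.choose k) (n - 1)) :
    2 ≤ (n.choose k).primeFactors.card :=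
  gcd_pred_two_prime_factors_general n k hk hkn hgcd
end
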